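/- Let 0 < a < b, α ∈ (0,1), and z(ξ,τ) = −τ² + l_α(τ)·ξ² where l_α(τ) = (1 + b·m_α(τ))/(1 + a·m_α(τ)) and m_α(τ) = |τ|^α(cos(απ/2) + i·sgn(τ)·sin(απ/2)). Let (ξ₀,τ₀) ∈ ℝ² with τ₀ ≠ 0 and τ₀² ≠ (b/a)ξ₀². Then there exist c > 0, R > 0 and an open set V ⊆ ℝ² \ {(0,0)} with (ξ₀,τ₀) ∈ V and λ·(ξ,τ) ∈ V for all λ > 0, (ξ,τ) ∈ V, such that |z(ξ,τ)| ≥ c(ξ² + τ²) for all (ξ,τ) ∈ V with ξ² + τ² ≥ R². -/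

import Mathlib

set_option maxHeartbeats 1000000


open Real Complex Set

/-- The multiplier `m_α(τ) = |τ|^α (cos(απ/2) + i·sgn(τ)·sin(απ/2))`. -/
noncomputable def mAlpha (α τ : ℝ) : ℂ :=
  ((|τ| ^ α : ℝ) : ℂ) *
    (((Real.cos (α * Real.pi / 2) : ℝ) : ℂ) +
      Complex.I * ((Real.sign τ : ℝ) : ℂ) * ((Real.sin (α * Real.pi / 2) : ℝ) : ℂ))

/-- The Zener multiplier `l_α(τ) = (1 + b·m_α(τ))/(1 + a·m_α(τ))`. -/
noncomputable def lAlpha (a b α τ : ℝ) : ℂ :=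
  (1 + (b : ℂ) * mAlpha α τ) / (1 + (a : ℂ) * mAlpha α τ)

/-- The Fourier symbol `z(ξ,τ) = −τ² + l_α(τ)·ξ²` of the time-fractional Zener
wave operator. -/
noncomputable def zZener (a b α ξ τ : ℝ) : ℂ :=
  -(τ : ℂ) ^ 2 + lAlpha a b α τ * (ξ : ℂ) ^ 2

/-- Norm of the multiplier. -/
lemma norm_mAlpha (α τ : ℝ) (hτ : τ ≠ 0) : ‖mAlpha α τ‖ = |τ| ^ α := by
  have hs2 : (Real.sign τ) ^ 2 = 1 := by
    rcases hτ.lt_or_gt with h | h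
    · rw [Real.sign_of_neg h]; norm_num
    · rw [Real.sign_of_pos h]; norm_num
  have hu : (((Real.cos (α * Real.pi / 2) : ℝ) : ℂ) +
      Complex.I * ((Real.sign τ : ℝ) : ℂ) * ((Real.sin (α * Real.pi / 2) : ℝ) : ℂ))
      = ((Real.cos (α * Real.pi / 2) : ℝ) : ℂ) +
        ((Real.sign τ * Real.sin (α * Real.pi / 2) : ℝ) : ℂ) * Complex.I := by
    push_cast; ring
  rw [mAlpha, norm_mul, hu]
  rw [Complex.norm_def, Complex.norm_def,
    Complex.normSq_add_mul_I]
  have h1 : Real.cos (α * Real.pi / 2) ^ 2 + (Real.sign τ * Real.sin (α * Real.pi / 2)) ^ 2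
      = 1 := by
    have := Real.sin_sq_add_cos_sq (α * Real.pi / 2)
    nlinarith [hs2]
  rw [h1, Real.sqrt_one, mul_one]
  have : Complex.normSq ((|τ| ^ α : ℝ) : ℂ) = (|τ| ^ α) ^ 2 := by
    rw [Complex.normSq_ofReal]; ring
  rw [this, Real.sqrt_sq (by positivity)]

theorem stmt13 (a b α : ℝ) (ha : 0 < a) (hab : a < b) (hα0 : 0 < α) (hα1 : α < 1)
    (ξ₀ τ₀ : ℝ) (hτ₀ : τ₀ ≠ 0) (hchar : τ₀ ^ 2 ≠ (b / a) * ξ₀ ^ 2) :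
    ∃ c : ℝ, 0 < c ∧ ∃ R : ℝ, 0 < R ∧ ∃ V : Set (ℝ × ℝ), IsOpen V ∧
      V ⊆ {q : ℝ × ℝ | q ≠ (0, 0)} ∧ (ξ₀, τ₀) ∈ V ∧
      (∀ lam : ℝ, 0 < lam → ∀ q : ℝ × ℝ, q ∈ V → (lam * q.1, lam * q.2) ∈ V) ∧
      ∀ q : ℝ × ℝ, q ∈ V → R ^ 2 ≤ q.1 ^ 2 + q.2 ^ 2 →
        c * (q.1 ^ 2 + q.2 ^ 2) ≤ ‖zZener a b α q.1 q.2‖ := by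
  have haC : (a : ℂ) ≠ 0 := by exact_mod_cast ha.ne'
  set r : ℝ := b / a with hr
  set S₀ : ℝ := ξ₀ ^ 2 + τ₀ ^ 2 with hS₀def
  have hτ₀2 : 0 < τ₀ ^ 2 := by positivity
  have hS₀ : 0 < S₀ := by nlinarith [sq_nonneg ξ₀]
  set ε : ℝ := τ₀ ^ 2 / (2 * S₀) with hεdef
  have hε : 0 < ε := by positivity
  have hne : τ₀ ^ 2 - r * ξ₀ ^ 2 ≠ 0 := sub_ne_zero.mpr hchar
  set δ : ℝ := |τ₀ ^ 2 - r * ξ₀ ^ 2| / (2 * S₀) with hδdef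
  have hδ : 0 < δ := by positivity
  set B : ℝ := b - a with hBdef
  have hB : 0 < B := sub_pos.mpr hab
  set M : ℝ := (1 + 2 * B / (a * δ)) / a with hMdef
  have hM : 0 < M := by positivity
  set K : ℝ := max M 1 with hKdef
  have hK : 0 < K := lt_of_lt_of_le one_pos (le_max_right _ _)
  set T : ℝ := K ^ (1 / α) with hTdef
  have hT : 0 < T := Real.rpow_pos_of_pos hK _
  set R : ℝ := T / Real.sqrt ε with hRdef
  have hR : 0 < R := div_pos hT (Real.sqrt_pos.mpr hε)
  set V : Set (ℝ × ℝ) :=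
    {q : ℝ × ℝ | ε * (q.1 ^ 2 + q.2 ^ 2) < q.2 ^ 2 ∧
      δ * (q.1 ^ 2 + q.2 ^ 2) < |q.2 ^ 2 - r * q.1 ^ 2|} with hVdef
  clear_value S₀ ε δ B M K T R V
  refine ⟨δ / 2, by positivity, R, hR, V, ?_, ?_, ?_, ?_, ?_⟩
  · -- open
    rw [hVdef, Set.setOf_and]
    refine IsOpen.inter (isOpen_lt ?_ ?_) (isOpen_lt ?_ ?_)
    · fun_prop
    · fun_prop
    · fun_prop
    · exact (Continuous.sub (by fun_prop) (by fun_prop)).abs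
  · -- avoids origin
    intro q hq
    rw [hVdef] at hq
    simp only [Set.mem_setOf_eq] at hq ⊢
    intro h
    obtain ⟨h1, -⟩ := hq
    rw [h] at h1
    norm_num at h1
  · -- contains base point
    rw [hVdef]
    simp only [Set.mem_setOf_eq]
    constructor
    · rw [← hS₀def]
      show ε * S₀ < τ₀ ^ 2
      rw [hεdef, div_mul_eq_mul_div, div_lt_iff₀ (by positivity)]
      nlinarith
    · rw [← hS₀def]
      show δ * S₀ < |τ₀ ^ 2 - r * ξ₀ ^ 2|
      have habs : 0 < |τ₀ ^ 2 - r * ξ₀ ^ 2| := abs_pos.mpr hne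
      rw [hδdef, div_mul_eq_mul_div, div_lt_iff₀ (by positivity)]
      nlinarith
  · -- cone
    intro lam hlam q hq
    rw [hVdef] at hq ⊢
    simp only [Set.mem_setOf_eq] at hq ⊢
    obtain ⟨h1, h2⟩ := hq
    have hl2 : 0 < lam ^ 2 := by positivity
    constructor
    · show ε * ((lam * q.1) ^ 2 + (lam * q.2) ^ 2) < (lam * q.2) ^ 2
      calc ε * ((lam * q.1) ^ 2 + (lam * q.2) ^ 2)
          = lam ^ 2 * (ε * (q.1 ^ 2 + q.2 ^ 2)) := by ring
        _ < lam ^ 2 * q.2 ^ 2 := mul_lt_mul_of_pos_left h1 hl2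
        _ = (lam * q.2) ^ 2 := by ring
    · show δ * ((lam * q.1) ^ 2 + (lam * q.2) ^ 2) < |(lam * q.2) ^ 2 - r * (lam * q.1) ^ 2|
      have : (lam * q.2) ^ 2 - r * (lam * q.1) ^ 2 = lam ^ 2 * (q.2 ^ 2 - r * q.1 ^ 2) := by
        ring
      rw [this, abs_mul, abs_of_pos hl2]
      calc δ * ((lam * q.1) ^ 2 + (lam * q.2) ^ 2)
          = lam ^ 2 * (δ * (q.1 ^ 2 + q.2 ^ 2)) := by ring
        _ < lam ^ 2 * |q.2 ^ 2 - r * q.1 ^ 2| := mul_lt_mul_of_pos_left h2 hl2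
  · -- main estimate
    rintro ⟨ξ, τ⟩ hq hRS
    rw [hVdef] at hq
    simp only [Set.mem_setOf_eq] at hq
    obtain ⟨h1, h2⟩ := hq
    simp only at h1 h2 hRS ⊢
    set S : ℝ := ξ ^ 2 + τ ^ 2 with hSdef
    clear_value S
    have hSpos : 0 < S := lt_of_lt_of_le (pow_pos hR 2) hRS
    have hεR : ε * R ^ 2 = T ^ 2 := by
      rw [hRdef, div_pow, Real.sq_sqrt hε.le, mul_comm, div_mul_cancel₀ _ hε.ne']
    have hτ2 : T ^ 2 < τ ^ 2 := by
      calc T ^ 2 = ε * R ^ 2 := hεR.symm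
        _ ≤ ε * S := mul_le_mul_of_nonneg_left hRS hε.le
        _ < τ ^ 2 := h1
    have hτT : T ≤ |τ| := by
      have := Real.sqrt_le_sqrt hτ2.le
      rwa [Real.sqrt_sq hT.le, Real.sqrt_sq_eq_abs] at this
    have hτne : τ ≠ 0 := by
      intro h; rw [h] at hτ2; nlinarith
    have hTα : T ^ α = K := by
      rw [hTdef, ← Real.rpow_mul hK.le, one_div, inv_mul_cancel₀ hα0.ne', Real.rpow_one]
    have hτα : M ≤ |τ| ^ α := by
      calc M ≤ K := by rw [hKdef]; exact le_max_left _ _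
        _ = T ^ α := hTα.symm
        _ ≤ |τ| ^ α := Real.rpow_le_rpow hT.le hτT hα0.le
    have hm : 1 + 2 * B / (a * δ) ≤ a * |τ| ^ α := by
      have haM : a * M = 1 + 2 * B / (a * δ) := by
        rw [hMdef]; field_simp
      calc 1 + 2 * B / (a * δ) = a * M := haM.symm
        _ ≤ a * |τ| ^ α := mul_le_mul_of_nonneg_left hτα ha.le
    set m : ℂ := mAlpha α τ with hmdef
    have hnm : ‖m‖ = |τ| ^ α := norm_mAlpha α τ hτne
    have hden1 : a * |τ| ^ α - 1 ≤ ‖1 + (a : ℂ) * m‖ := by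
      have h := norm_sub_norm_le ((a : ℂ) * m) (-1 : ℂ)
      have ham : ‖(a : ℂ) * m‖ = a * |τ| ^ α := by
        rw [norm_mul, hnm, Complex.norm_real, Real.norm_eq_abs, abs_of_pos ha]
      rw [ham] at h
      simpa [sub_neg_eq_add, add_comm] using h
    have hBδ : 0 < 2 * B / (a * δ) := by positivity
    have hdenlb : 2 * B / (a * δ) ≤ ‖1 + (a : ℂ) * m‖ := by linarith
    have hdenpos : 0 < ‖1 + (a : ℂ) * m‖ := lt_of_lt_of_le hBδ hdenlb
    have hdne : (1 + (a : ℂ) * m) ≠ 0 := by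
      intro h; rw [h] at hdenpos; simp at hdenpos
    have key : (lAlpha a b α τ - ((r : ℝ) : ℂ)) * ((a : ℂ) * (1 + (a : ℂ) * m))
        = (a : ℂ) - (b : ℂ) := by
      rw [lAlpha, ← hmdef, hr]
      push_cast
      rw [div_sub_div _ _ hdne haC, div_mul_eq_mul_div, div_eq_iff (mul_ne_zero hdne haC)]
      ring
    have hnormdiff : ‖lAlpha a b α τ - ((r : ℝ) : ℂ)‖ * (a * ‖1 + (a : ℂ) * m‖) = B := by
      have h := congrArg norm key
      rw [norm_mul, norm_mul] at h
      have h1' : ‖(a : ℂ)‖ = a := by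
        rw [Complex.norm_real, Real.norm_eq_abs, abs_of_pos ha]
      have h2' : ‖(a : ℂ) - (b : ℂ)‖ = B := by
        rw [show (a : ℂ) - (b : ℂ) = ((a - b : ℝ) : ℂ) by push_cast; ring,
          Complex.norm_real, Real.norm_eq_abs, abs_of_neg (by linarith : a - b < 0), hBdef]
        ring
      rw [h1', h2'] at h
      linarith [h]
    have hld : ‖lAlpha a b α τ - ((r : ℝ) : ℂ)‖ ≤ δ / 2 := by
      set X : ℝ := ‖lAlpha a b α τ - ((r : ℝ) : ℂ)‖ with hXdef
      have hX : 0 ≤ X := norm_nonneg _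
      have haD : 2 * B / δ ≤ a * ‖1 + (a : ℂ) * m‖ := by
        have : a * (2 * B / (a * δ)) = 2 * B / δ := by field_simp
        calc 2 * B / δ = a * (2 * B / (a * δ)) := this.symm
          _ ≤ a * ‖1 + (a : ℂ) * m‖ := mul_le_mul_of_nonneg_left hdenlb ha.le
      have h1' : X * (2 * B / δ) ≤ B := by
        calc X * (2 * B / δ) ≤ X * (a * ‖1 + (a : ℂ) * m‖) :=
              mul_le_mul_of_nonneg_left haD hX
          _ = B := hnormdiff
      have h2' : X * (2 * B) ≤ B * δ := by
        have := (div_le_iff₀ hδ).mp (by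
          calc X * (2 * B) / δ = X * (2 * B / δ) := by ring
            _ ≤ B := h1')
        linarith
      have h3' : X * 2 ≤ δ := by
        have := (mul_le_mul_iff_of_pos_right hB).mp (by
          calc X * 2 * B = X * (2 * B) := by ring
            _ ≤ B * δ := h2'
            _ = δ * B := by ring)
        exact this
      linarith
    have hz : zZener a b α ξ τ = ((-(τ ^ 2) + r * ξ ^ 2 : ℝ) : ℂ)
        + (lAlpha a b α τ - ((r : ℝ) : ℂ)) * (ξ : ℂ) ^ 2 := by
      rw [zZener]; push_cast; ring
    have hx : ‖((-(τ ^ 2) + r * ξ ^ 2 : ℝ) : ℂ)‖ = |τ ^ 2 - r * ξ ^ 2| := by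
      rw [Complex.norm_real, Real.norm_eq_abs, show -(τ ^ 2) + r * ξ ^ 2
        = -(τ ^ 2 - r * ξ ^ 2) by ring, abs_neg]
    have hy : ‖(lAlpha a b α τ - ((r : ℝ) : ℂ)) * (ξ : ℂ) ^ 2‖ ≤ δ / 2 * S := by
      rw [norm_mul]
      have hξ : ‖(ξ : ℂ) ^ 2‖ = ξ ^ 2 := by
        rw [norm_pow, Complex.norm_real, Real.norm_eq_abs, _root_.sq_abs]
      rw [hξ]
      have hξS : ξ ^ 2 ≤ S := by
        rw [hSdef]; nlinarith [sq_nonneg τ]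
      calc ‖lAlpha a b α τ - ((r : ℝ) : ℂ)‖ * ξ ^ 2
          ≤ (δ / 2) * ξ ^ 2 := mul_le_mul_of_nonneg_right hld (sq_nonneg ξ)
        _ ≤ δ / 2 * S := mul_le_mul_of_nonneg_left hξS (by positivity)
    have htri : ‖((-(τ ^ 2) + r * ξ ^ 2 : ℝ) : ℂ)‖ ≤ ‖zZener a b α ξ τ‖
        + ‖(lAlpha a b α τ - ((r : ℝ) : ℂ)) * (ξ : ℂ) ^ 2‖ := by
      have := norm_add_le (zZener a b α ξ τ)
        (-((lAlpha a b α τ - ((r : ℝ) : ℂ)) * (ξ : ℂ) ^ 2))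
      rw [hz] at this ⊢
      simpa using this
    rw [hx] at htri
    linarith [htri, h2, hy]
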